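/- For q = 3 and the quartic extension F_{81} of F_3, there exists a generator γ of F_{81} over F_3 such that γ + a is not a generator of the multiplicative group F_{81}* for any a ∈ F_3. -/

import Mathlib

instance : Fact (Nat.Prime 3) := ⟨by norm_num⟩

/-!
Take for `γ` a root of `X ^ 4 + X ^ 2 - 1` in `𝔽₈₁`; one exists because `𝔽₈₁ˣ`, cyclic of
order 80, has elements of order 16, i.e. roots of `X ^ 8 + 1`, which over `𝔽₃` factors into two
quartics exchanged by `z ↦ z ^ 5`. Then `γ ^ 8 = -1`, so `γ` has order 16; since 16 divides none
of `3 - 1`, `3 ^ 2 - 1`, `3 ^ 3 - 1`, `γ` lies in no proper subfield and generates `𝔽₈₁`.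
For `a = ±1`, `(γ + a) ^ 40 = (γ + a) ^ (1 + 3 + 9 + 27)` is the norm of `γ + a` down to `𝔽₃`,
the product of its Frobenius conjugates, and it equals `1`; so neither `γ` nor `γ ± 1` has
order 80.
-/

section CharThree

variable {R : Type*} [CommRing R] [CharP R 3] {x : R}

theorem pow_eight_eq_neg_one_of_pow_four_add_sq_eq_one (hx : x ^ 4 + x ^ 2 = 1) :
    x ^ 8 = -1 := by
  linear_combination (x ^ 4 - x ^ 2 + 2) * hx + (1 - x ^ 2) * CharP.cast_eq_zero R 3

theorem orderOf_eq_sixteen_of_pow_four_add_sq_eq_one [Nontrivial R] (hx : x ^ 4 + x ^ 2 = 1) :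
    orderOf x = 16 := by
  have h8 := pow_eight_eq_neg_one_of_pow_four_add_sq_eq_one hx
  have hchar : ringChar R ≠ 2 := by rw [ringChar.eq R 3]; norm_num
  refine orderOf_eq_prime_pow (p := 2) (n := 3) ?_ ?_
  · simpa [h8] using Ring.neg_one_ne_one_of_char_ne_two hchar
  · rw [show 2 ^ (3 + 1) = 8 * 2 from rfl, pow_mul, h8]; norm_num

theorem add_pow_forty_eq_one_of_pow_four_add_sq_eq_one {c : R} (hx : x ^ 4 + x ^ 2 = 1)
    (hc : c ^ 2 = 1) : (x + c) ^ 40 = 1 := by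
  have h8 := pow_eight_eq_neg_one_of_pow_four_add_sq_eq_one hx
  have frob : ∀ y : R, (y + c) ^ 3 = y ^ 3 + c := fun y => by
    rw [add_pow_char]; linear_combination c * hc
  have frob9 : ∀ y : R, (y + c) ^ 9 = y ^ 9 + c := fun y => by
    rw [show 9 = 3 * 3 from rfl, pow_mul, frob, frob, ← pow_mul]
  calc (x + c) ^ 40 = (x + c) * (x + c) ^ 3 * (x + c) ^ 9 * ((x + c) ^ 3) ^ 9 := by ring
    _ = (x + c) * (x ^ 3 + c) * (x ^ 9 + c) * (x ^ 27 + c) := by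
      rw [frob, frob9, frob9, ← pow_mul]
    _ = (x + c) * (x ^ 3 + c) * (-x + c) * (-x ^ 3 + c) := by
      rw [show x ^ 9 = -x by linear_combination x * h8,
        show x ^ 27 = -x ^ 3 by linear_combination x ^ 3 * (x ^ 16 - x ^ 8 + 1) * h8]
    _ = 1 := by
      linear_combination (1 + c ^ 2 - x ^ 2 - x ^ 6) * hc + h8 + (1 - x ^ 2) * hx
        - x ^ 2 * CharP.cast_eq_zero R 3

theorem exists_pow_four_add_sq_eq_one_of_pow_eight_eq_neg_one [IsDomain R] {z : R}
    (hz : z ^ 8 = -1) : ∃ x : R, x ^ 4 + x ^ 2 = 1 := by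
  -- `z ↦ z ^ 5 = z ^ 4 * z`, with `z ^ 4` a square root of `-1`, swaps the quartic factors of
  -- `X ^ 8 + 1 = (X ^ 4 + X ^ 2 - 1) * (X ^ 4 - X ^ 2 - 1)` over `𝔽₃`.
  have hfac : (z ^ 4 + z ^ 2 - 1) * ((z ^ 5) ^ 4 + (z ^ 5) ^ 2 - 1) = 0 := by
    linear_combination (1 + (z ^ 4 + z ^ 2 - 1) * (z ^ 4 * (z ^ 8 - 1) + z ^ 2)) * hz
      - z ^ 4 * CharP.cast_eq_zero R 3
  rcases mul_eq_zero.1 hfac with h | h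
  exacts [⟨z, sub_eq_zero.1 h⟩, ⟨z ^ 5, sub_eq_zero.1 h⟩]

end CharThree

theorem FiniteField.exists_pow_eq_neg_one {K : Type*} [Field K] [Finite K] {n : ℕ}
    (hn : 2 * n ∣ Nat.card K - 1) : ∃ z : K, z ^ n = -1 := by
  obtain ⟨g, hg⟩ := IsCyclic.exists_ofOrder_eq_natCard (α := Kˣ)
  rw [Nat.card_units, ← orderOf_units] at hg
  obtain ⟨k, hk⟩ := hn
  have hpos : 0 < n * k := Nat.pos_of_ne_zero fun h => by
    have := Finite.one_lt_card (α := K)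
    rw [mul_assoc, h] at hk; omega
  refine ⟨(g : K) ^ k, ?_⟩
  rw [← pow_mul, mul_comm]
  refine (sq_eq_one_iff.1 ?_).resolve_left
    (pow_ne_one_of_lt_orderOf hpos.ne' (by rw [hg, hk, mul_assoc]; omega))
  rw [← pow_mul, mul_comm, ← mul_assoc, ← hk, ← hg, pow_orderOf_eq_one]

theorem orderOf_dvd_sub_one_of_pow_eq_self {M : Type*} [MonoidWithZero M] [IsLeftCancelMulZero M]
    {x : M} {m : ℕ} (hx : x ≠ 0) (hm : 1 ≤ m) (h : x ^ m = x) : orderOf x ∣ m - 1 :=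
  orderOf_dvd_of_pow_eq_one <| mul_left_cancel₀ hx <| by
    rw [← pow_succ', Nat.sub_add_cancel hm, h, mul_one]

open IntermediateField Module in
theorem FiniteField.adjoin_eq_top_of_pow_ne_self {K L : Type*} [Field K] [Field L] [Finite L]
    [Algebra K L] {x : L} (h : ∀ d, 0 < d → d < finrank K L → x ^ Nat.card K ^ d ≠ x) :
    Algebra.adjoin K {x} = ⊤ := by
  have hKx : K⟮x⟯.toSubalgebra = Algebra.adjoin K {x} :=
    adjoin_simple_toSubalgebra_of_isAlgebraic (IsAlgebraic.of_finite K x)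
  have := Fintype.ofFinite K⟮x⟯
  have hfix : x ^ Nat.card K ^ finrank K K⟮x⟯ = x := by
    have := FiniteField.pow_card (⟨x, mem_adjoin_simple_self K x⟩ : K⟮x⟯)
    rwa [Fintype.card_eq_nat_card, natCard_eq_pow_finrank (K := K), Subtype.ext_iff] at this
  have hle : finrank K K⟮x⟯ ≤ finrank K L := by
    simpa using IntermediateField.finrank_le_of_le_right (le_top : K⟮x⟯ ≤ ⊤)
  have hfull : finrank K K⟮x⟯ = finrank K L := by
    by_contra hne
    exact h _ finrank_pos (lt_of_le_of_ne hle hne) hfix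
  rw [← hKx, eq_of_le_of_finrank_eq le_top (hfull.trans finrank_top'.symm), top_toSubalgebra]

/-- `q = 3` is not in `T₄`: there exists a generator `γ` of `F₈₁` over `F₃`
such that `γ + a` is not a generator of the multiplicative group `F₈₁ˣ`
(cyclic of order 80) for any `a ∈ F₃`. -/
theorem three_not_in_T4 :
    ∃ γ : GaloisField 3 4,
      Algebra.adjoin (ZMod 3) {γ} = ⊤ ∧
      ∀ a : ZMod 3,
        orderOf (γ + algebraMap (ZMod 3) (GaloisField 3 4) a) ≠ 80 := by
  obtain ⟨z, hz⟩ := FiniteField.exists_pow_eq_neg_one (K := GaloisField 3 4) (n := 8)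
    (by rw [GaloisField.card 3 4 (by norm_num)]; norm_num)
  obtain ⟨γ, hγ⟩ := exists_pow_four_add_sq_eq_one_of_pow_eight_eq_neg_one hz
  have h16 := orderOf_eq_sixteen_of_pow_four_add_sq_eq_one hγ
  refine ⟨γ, FiniteField.adjoin_eq_top_of_pow_ne_self fun d hd hd4 hfix => ?_, fun a => ?_⟩
  · rw [GaloisField.finrank 3 (by norm_num)] at hd4
    rw [Nat.card_zmod] at hfix
    have hγ0 : γ ≠ 0 := by rintro rfl; simp at h16
    have := orderOf_dvd_sub_one_of_pow_eq_self hγ0 (Nat.one_le_pow _ _ three_pos) hfix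
    rw [h16] at this
    interval_cases d <;> norm_num at this
  · by_cases ha : a = 0
    · simp [ha, h16]
    · have hc : algebraMap (ZMod 3) (GaloisField 3 4) a ^ 2 = 1 := by
        rw [← map_pow, show a ^ 2 = 1 by revert a; decide, map_one]
      have := Nat.le_of_dvd (by norm_num)
        (orderOf_dvd_of_pow_eq_one (add_pow_forty_eq_one_of_pow_four_add_sq_eq_one hγ hc))
      omega
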